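/- The CUP update is conflict-free for every unlearning intensity: if u and v are linearly independent and w_f > 0 and w_r > 0, then for every γ ∈ [0,1] the pivoted direction satisfies ⟨g_γ, u⟩ ≥ 0 and ⟨g_γ, v⟩ ≥ 0. -/

import Mathlib

open Real InnerProductSpace

/-!
Write `α = ∠(u, v)`. The fidelity anchor is a positive multiple of the rejection `r` of `v` from
`u`, and the efficacy anchor one of the rejection of `u` from `v`; these two rejections make the
angle `φ = π - α`. Since `r ⊥ u` and `v = ‖v‖ (sin α • r/‖r‖ + cos α • u/‖u‖)`, the pivoted
direction `g_θ` satisfies `⟪g_θ, u⟫ = ‖u‖ sin θ` and `⟪g_θ, v⟫ = ‖v‖ sin (θ + α)`, and both sines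
are nonnegative for `0 ≤ θ ≤ φ`.
-/

open InnerProductGeometry

section

variable {E : Type*} [NormedAddCommGroup E] [InnerProductSpace ℝ E]

noncomputable def rejection (u x : E) : E := x - (⟪x, u⟫_ℝ / ‖u‖ ^ 2) • u

theorem inner_rejection_left (u x : E) : ⟪rejection u x, u⟫_ℝ = 0 := by
  rcases eq_or_ne u 0 with rfl | hu
  · simp
  rw [rejection, inner_sub_left, real_inner_smul_left, real_inner_self_eq_norm_sq]
  field_simp
  ring

theorem rejection_smul_add_smul {u : E} (hu : u ≠ 0) (a b : ℝ) (x : E) :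
    rejection u (a • u + b • x) = b • rejection u x := by
  have hu' : ‖u‖ ≠ 0 := norm_ne_zero_iff.mpr hu
  simp only [rejection, inner_add_left, real_inner_smul_left, real_inner_self_eq_norm_sq]
  rw [add_div, mul_div_assoc, div_self (pow_ne_zero 2 hu'), mul_one, mul_div_assoc]
  module

theorem real_inner_rejection_self (u x : E) : ⟪rejection u x, x⟫_ℝ = ‖rejection u x‖ ^ 2 := by
  rw [← real_inner_self_eq_norm_sq]
  nth_rw 3 [rejection]
  rw [inner_sub_right, real_inner_smul_right, inner_rejection_left, mul_zero, sub_zero]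

theorem norm_rejection (u x : E) : ‖rejection u x‖ = ‖x‖ * sin (angle u x) := by
  rcases eq_or_ne u 0 with rfl | hu
  · simp [rejection]
  have hu' : ‖u‖ ≠ 0 := norm_ne_zero_iff.mpr hu
  refine (sq_eq_sq₀ (norm_nonneg _) (mul_nonneg (norm_nonneg _) (sin_angle_nonneg u x))).mp ?_
  have hcos := cos_angle_mul_norm_mul_norm u x
  rw [← real_inner_rejection_self, rejection, inner_sub_left, real_inner_smul_left,
    real_inner_self_eq_norm_sq, real_inner_comm, ← hcos, mul_pow, sin_sq]
  field_simp

theorem rejection_ne_zero {u v : E} (h : LinearIndependent ℝ ![u, v]) : rejection u v ≠ 0 := by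
  intro h0
  have := LinearIndependent.pair_iff.mp h (-(⟪v, u⟫_ℝ / ‖u‖ ^ 2)) 1
    (by rw [← h0, rejection]; module)
  exact one_ne_zero this.2

theorem inv_norm_smul_smul_of_pos {c : ℝ} (hc : 0 < c) (x : E) :
    ‖c • x‖⁻¹ • (c • x) = ‖x‖⁻¹ • x := by
  rcases eq_or_ne x 0 with rfl | hx
  · simp
  rw [norm_smul, Real.norm_of_nonneg hc.le, smul_smul, mul_inv]
  field_simp

theorem angle_rejection_rejection {u v : E} (h : LinearIndependent ℝ ![u, v]) :
    angle (rejection u v) (rejection v u) = π - angle u v := by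
  have hu : u ≠ 0 := by simpa using h.ne_zero 0
  have hv : v ≠ 0 := by simpa using h.ne_zero 1
  have hr : ‖rejection u v‖ ≠ 0 := norm_ne_zero_iff.mpr (rejection_ne_zero h)
  have hsin : sin (angle u v) ≠ 0 := by
    rw [norm_rejection] at hr
    exact right_ne_zero_of_mul hr
  have hinner : ⟪rejection u v, rejection v u⟫_ℝ = -(⟪u, v⟫_ℝ / ‖v‖ ^ 2) * ‖rejection u v‖ ^ 2 := by
    nth_rw 2 [rejection]
    rw [inner_sub_right, real_inner_smul_right, inner_rejection_left, real_inner_rejection_self]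
    ring
  have hcos : cos (angle (rejection u v) (rejection v u)) = -cos (angle u v) := by
    rw [cos_angle, hinner, norm_rejection, norm_rejection, angle_comm v u, cos_angle]
    have hu' : ‖u‖ ≠ 0 := norm_ne_zero_iff.mpr hu
    have hv' : ‖v‖ ≠ 0 := norm_ne_zero_iff.mpr hv
    field_simp
  rw [← arccos_cos (angle_nonneg _ _) (angle_le_pi _ _), hcos, arccos_neg,
    arccos_cos (angle_nonneg _ _) (angle_le_pi _ _)]

noncomputable def pivot (θ : ℝ) (x u : E) : E := cos θ • (‖x‖⁻¹ • x) + sin θ • (‖u‖⁻¹ • u)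

theorem inner_pivot_of_inner_eq_zero {x u : E} (hxu : ⟪x, u⟫_ℝ = 0) (θ : ℝ) :
    ⟪pivot θ x u, u⟫_ℝ = ‖u‖ * sin θ := by
  rcases eq_or_ne u 0 with rfl | hu
  · simp
  have hu' : ‖u‖ ≠ 0 := norm_ne_zero_iff.mpr hu
  simp only [pivot, inner_add_left, real_inner_smul_left, hxu, mul_zero, zero_add,
    real_inner_self_eq_norm_sq]
  field_simp

theorem inner_pivot_rejection {u : E} (hu : u ≠ 0) (θ : ℝ) (v : E) :
    ⟪pivot θ (rejection u v) u, v⟫_ℝ = ‖v‖ * sin (θ + angle u v) := by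
  have hu' : ‖u‖ ≠ 0 := norm_ne_zero_iff.mpr hu
  simp only [pivot, inner_add_left, real_inner_smul_left, real_inner_rejection_self,
    ← cos_angle_mul_norm_mul_norm u v, norm_rejection, sin_add]
  field_simp
  ring

end

/-- The CUP update is conflict-free for every unlearning intensity `γ ∈ [0,1]`:
`⟪g_γ, u⟫ ≥ 0` and `⟪g_γ, v⟫ ≥ 0`. -/
theorem stmt_13 {E : Type*} [NormedAddCommGroup E] [InnerProductSpace ℝ E]
    (u v : E) (hu : u ≠ 0) (hv : v ≠ 0)
    (hind : LinearIndependent ℝ ![u, v])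
    (wf wr : ℝ) (hwf : 0 < wf) (hwr : 0 < wr)
    (t : E) (ht : t = wf • u + wr • v)
    (geff : E) (hgeff : geff = t - (⟪t, v⟫_ℝ / ‖v‖ ^ 2) • v)
    (gfid : E) (hgfid : gfid = t - (⟪t, u⟫_ℝ / ‖u‖ ^ 2) • u)
    (φ : ℝ) (hφ : φ = Real.arccos (⟪gfid, geff⟫_ℝ / (‖gfid‖ * ‖geff‖)))
    (γ : ℝ) (hγ : γ ∈ Set.Icc (0 : ℝ) 1) :
    0 ≤ ⟪Real.cos (γ * φ) • (‖gfid‖⁻¹ • gfid) + Real.sin (γ * φ) • (‖u‖⁻¹ • u), u⟫_ℝ ∧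
      0 ≤ ⟪Real.cos (γ * φ) • (‖gfid‖⁻¹ • gfid) + Real.sin (γ * φ) • (‖u‖⁻¹ • u), v⟫_ℝ := by
  obtain ⟨hγ0, hγ1⟩ := hγ
  have hfid : gfid = wr • rejection u v := by
    rw [hgfid, ht]
    exact rejection_smul_add_smul hu wf wr v
  have heff : geff = wf • rejection v u := by
    rw [hgeff, ht, add_comm]
    exact rejection_smul_add_smul hv wr wf u
  have hφα : φ = π - angle u v := by
    rw [hφ, ← angle, hfid, heff, angle_smul_left_of_pos _ _ hwr, angle_smul_right_of_pos _ _ hwf,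
      angle_rejection_rejection hind]
  rw [hfid, inv_norm_smul_smul_of_pos hwr]
  change 0 ≤ ⟪pivot (γ * φ) (rejection u v) u, u⟫_ℝ ∧
    0 ≤ ⟪pivot (γ * φ) (rejection u v) u, v⟫_ℝ
  rw [inner_pivot_of_inner_eq_zero (inner_rejection_left u v), inner_pivot_rejection hu]
  have hφ0 : 0 ≤ φ := hφα ▸ sub_nonneg.mpr (angle_le_pi u v)
  have hθ0 : 0 ≤ γ * φ := mul_nonneg hγ0 hφ0
  have hθφ : γ * φ ≤ φ := mul_le_of_le_one_left hφ0 hγ1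
  have hα0 := angle_nonneg u v
  exact ⟨mul_nonneg (norm_nonneg u) (sin_nonneg_of_nonneg_of_le_pi hθ0 (by linarith)),
    mul_nonneg (norm_nonneg v) (sin_nonneg_of_nonneg_of_le_pi (by linarith) (by linarith))⟩
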